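/- Suppose E^s : ℝ³ → ℂ³ satisfies |E^s(x)| ≤ C/|x| for |x| ≥ R, and E = E^i + E^s where E^i(x) = q e^{i k x·d} for a fixed q ∈ ℂ³, unit vector d, and k > 0. If S ⊂ ℝ³ is unbounded and ν × E(x) = 0 for all x ∈ S (ν a fixed unit vector), then ν × q = 0. -/

import Mathlib

/-- Componentwise complex cross product on ℂ³. -/
noncomputable def cross3C (a b : EuclideanSpace ℂ (Fin 3)) : EuclideanSpace ℂ (Fin 3) :=
  (WithLp.equiv 2 (Fin 3 → ℂ)).symm
    (crossProduct ((WithLp.equiv 2 (Fin 3 → ℂ)) a) ((WithLp.equiv 2 (Fin 3 → ℂ)) b))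

/-- Complexification of a real vector in ℝ³. -/
noncomputable def toC3 (v : EuclideanSpace ℝ (Fin 3)) : EuclideanSpace ℂ (Fin 3) :=
  (WithLp.equiv 2 (Fin 3 → ℂ)).symm (fun i => (v i : ℂ))

/-! The scattered field, and with it `ν × Eˢ`, tends to `0` along the cobounded filter.
The plane-wave phase is unimodular, so on `S` the constant `‖ν × q‖` equals `‖ν × Eˢ(x)‖`.
As `S` is unbounded it meets every neighbourhood of infinity, and uniqueness of limits
forces `‖ν × q‖ = 0`. -/

open Filter Bornology Topology

theorem Bornology.neBot_cobounded_inf_principal {α : Type*} [Bornology α] {S : Set α}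
    (hS : ¬IsBounded S) : (cobounded α ⊓ 𝓟 S).NeBot := by
  refine inf_principal_neBot_iff.2 fun U hU => ?_
  by_contra hempty
  exact hS ((isBounded_compl_iff.2 hU).subset fun x hxS hxU => hempty ⟨x, hxU, hxS⟩)

theorem tendsto_cobounded_zero_of_norm_le_div_norm {E F : Type*} [SeminormedAddCommGroup E]
    [SeminormedAddCommGroup F] {f : E → F} {C R : ℝ}
    (hdecay : ∀ x, R ≤ ‖x‖ → ‖f x‖ ≤ C / ‖x‖) :
    Tendsto f (cobounded E) (𝓝 0) :=
  squeeze_zero_norm' ((tendsto_norm_cobounded_atTop.eventually_ge_atTop R).mono hdecay)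
    (tendsto_const_nhds.div_atTop tendsto_norm_cobounded_atTop)

noncomputable def cross3CL (a : EuclideanSpace ℂ (Fin 3)) :
    EuclideanSpace ℂ (Fin 3) →L[ℂ] EuclideanSpace ℂ (Fin 3) :=
  LinearMap.toContinuousLinearMap
    { toFun := cross3C a
      map_add' := fun b c => by simp [cross3C]
      map_smul' := fun r b => by simp [cross3C] }

theorem cross3CL_apply (a b : EuclideanSpace ℂ (Fin 3)) : cross3CL a b = cross3C a b := rfl

theorem norm_cross3C_exp_mul_I_smul (a q : EuclideanSpace ℂ (Fin 3)) (t : ℝ) :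
    ‖cross3C a (Complex.exp (Complex.I * t) • q)‖ = ‖cross3C a q‖ := by
  rw [← cross3CL_apply, map_smul, norm_smul, mul_comm Complex.I, Complex.norm_exp_ofReal_mul_I,
    one_mul, cross3CL_apply]

theorem stmt11_general (Es : EuclideanSpace ℝ (Fin 3) → EuclideanSpace ℂ (Fin 3))
    (C R : ℝ) (hdecay : ∀ x : EuclideanSpace ℝ (Fin 3), R ≤ ‖x‖ → ‖Es x‖ ≤ C / ‖x‖)
    (q : EuclideanSpace ℂ (Fin 3)) (d : EuclideanSpace ℝ (Fin 3))
    (k : ℝ)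
    (Ei E : EuclideanSpace ℝ (Fin 3) → EuclideanSpace ℂ (Fin 3))
    (hEi : ∀ x, Ei x = Complex.exp (Complex.I * k * ((inner ℝ x d : ℝ) : ℂ)) • q)
    (hE : ∀ x, E x = Ei x + Es x)
    (S : Set (EuclideanSpace ℝ (Fin 3))) (hS : ¬ Bornology.IsBounded S)
    (ν : EuclideanSpace ℝ (Fin 3))
    (hvanish : ∀ x ∈ S, cross3C (toC3 ν) (E x) = 0) :
    cross3C (toC3 ν) q = 0 := by
  have hscattered : Tendsto (fun x => cross3C (toC3 ν) (Es x)) (cobounded _) (𝓝 0) :=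
    ((cross3CL (toC3 ν)).continuous.tendsto' 0 0 (map_zero _)).comp
      (tendsto_cobounded_zero_of_norm_le_div_norm hdecay)
  have htangential : ∀ x ∈ S, ‖cross3C (toC3 ν) q‖ = ‖cross3C (toC3 ν) (Es x)‖ := by
    intro x hx
    have hsum := hvanish x hx
    rw [hE, hEi, ← cross3CL_apply, map_add, cross3CL_apply, cross3CL_apply,
      add_eq_zero_iff_eq_neg, mul_assoc, ← Complex.ofReal_mul] at hsum
    rw [← norm_cross3C_exp_mul_I_smul _ q (k * inner ℝ x d), hsum, norm_neg]
  have := Bornology.neBot_cobounded_inf_principal hS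
  have hconst : Tendsto (fun _ => ‖cross3C (toC3 ν) q‖) (cobounded _ ⊓ 𝓟 S) (𝓝 0) := by
    refine ((tendsto_zero_iff_norm_tendsto_zero.1 hscattered).mono_left inf_le_left).congr' ?_
    filter_upwards [mem_inf_of_right (mem_principal_self S)] with x hx
    exact (htangential x hx).symm
  exact norm_eq_zero.1 (tendsto_nhds_unique tendsto_const_nhds hconst)

/-- if the scattered field decays like `C/|x|`, the incident field is the
plane wave `q e^{i k x·d}`, and the tangential component `ν × (Eⁱ + Eˢ)` vanishes on an
unbounded set `S`, then `ν × q = 0`. -/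
theorem stmt11 (Es : EuclideanSpace ℝ (Fin 3) → EuclideanSpace ℂ (Fin 3))
    (C R : ℝ) (hdecay : ∀ x : EuclideanSpace ℝ (Fin 3), R ≤ ‖x‖ → ‖Es x‖ ≤ C / ‖x‖)
    (q : EuclideanSpace ℂ (Fin 3)) (d : EuclideanSpace ℝ (Fin 3)) (hd : ‖d‖ = 1)
    (k : ℝ) (hk : 0 < k)
    (Ei E : EuclideanSpace ℝ (Fin 3) → EuclideanSpace ℂ (Fin 3))
    (hEi : ∀ x, Ei x = Complex.exp (Complex.I * k * ((inner ℝ x d : ℝ) : ℂ)) • q)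
    (hE : ∀ x, E x = Ei x + Es x)
    (S : Set (EuclideanSpace ℝ (Fin 3))) (hS : ¬ Bornology.IsBounded S)
    (ν : EuclideanSpace ℝ (Fin 3)) (hν : ‖ν‖ = 1)
    (hvanish : ∀ x ∈ S, cross3C (toC3 ν) (E x) = 0) :
    cross3C (toC3 ν) q = 0 :=
  stmt11_general Es C R hdecay q d k Ei E hEi hE S hS ν hvanish
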